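/- arXiv:2201.10509 — 3 statements merged into one kernel-verified Lean document; each statement's English description precedes it below -/
import Mathlib

section
/- Let t_s < t_f, let σ : ℝ → ℝ satisfy σ(t) ∈ [0, 1] for every t ∈ [t_s, t_f], and let u_{1,s} < u_{N,s}, u_{1,f} < u_{N,f} be real numbers. Define leader trajectories u_1(t) = (1 − σ(t)) u_{1,s} + σ(t) u_{1,f} and u_N(t) = (1 − σ(t)) u_{N,s} + σ(t) u_{N,f}. For two agents i ≠ j with reference weights β_{i,s}, β_{i,f}, β_{j,s}, β_{j,f} ∈ ℝ, define β_i(t) = (1 − σ(t)) β_{i,s} + σ(t) β_{i,f} and u_i(t) = (1 − β_i(t)) u_1(t) + β_i(t) u_N(t), and similarly for j. If β_{ij,s} = β_{i,s} − β_{j,s} and β_{ij,f} = β_{i,f} − β_{j,f} are nonzero with the same sign, then for every t ∈ [t_s, t_f], |u_i(t) − u_j(t)| ≥ d_min · min{|β_{ij,s}|, |β_{ij,f}|}, where d_min = min{u_{N,s} − u_{1,s}, u_{N,f} − u_{1,f}}. -/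
/-- Quantitative core of Theorem 1: if the endpoint reference-weight differences of
two agents are nonzero with the same sign, their desired coordinates along the
deployment axis stay at least `d_min · min |β_{ij,s}| |β_{ij,f}|` apart. -/
theorem follower_separation_lower_bound
    (ts tf : ℝ) (hts : ts < tf)
    (σ : ℝ → ℝ) (hσ : ∀ t ∈ Set.Icc ts tf, σ t ∈ Set.Icc (0 : ℝ) 1)
    (u1s uNs u1f uNf : ℝ) (hs : u1s < uNs) (hf : u1f < uNf)
    (u1 uN : ℝ → ℝ)
    (hu1 : ∀ t, u1 t = (1 - σ t) * u1s + σ t * u1f)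
    (huN : ∀ t, uN t = (1 - σ t) * uNs + σ t * uNf)
    (βis βif βjs βjf : ℝ)
    (βi βj ui uj : ℝ → ℝ)
    (hβi : ∀ t, βi t = (1 - σ t) * βis + σ t * βif)
    (hβj : ∀ t, βj t = (1 - σ t) * βjs + σ t * βjf)
    (hui : ∀ t, ui t = (1 - βi t) * u1 t + βi t * uN t)
    (huj : ∀ t, uj t = (1 - βj t) * u1 t + βj t * uN t)
    (hsign : (βis - βjs) * (βif - βjf) > 0) :
    ∀ t ∈ Set.Icc ts tf,
      min (uNs - u1s) (uNf - u1f) * min |βis - βjs| |βif - βjf| ≤ |ui t - uj t| := by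
  intro t ht
  obtain ⟨h0, h1⟩ := hσ t ht
  set s := σ t with hsdef
  set a := βis - βjs with ha
  set b := βif - βjf with hb
  have hd : ui t - uj t =
      ((1 - s) * a + s * b) * ((1 - s) * (uNs - u1s) + s * (uNf - u1f)) := by
    rw [hui, huj, hβi, hβj, hu1, huN]; ring
  set U := (1 - s) * (uNs - u1s) + s * (uNf - u1f) with hUdef
  set B := (1 - s) * a + s * b with hBdef
  have hmU : min (uNs - u1s) (uNf - u1f) ≤ U := by
    have h1' := min_le_left (uNs - u1s) (uNf - u1f)
    have h2' := min_le_right (uNs - u1s) (uNf - u1f)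
    nlinarith
  have hU0 : 0 ≤ U := by
    have : (0:ℝ) < min (uNs - u1s) (uNf - u1f) := lt_min (by linarith) (by linarith)
    linarith
  have hmB : min |a| |b| ≤ |B| := by
    rcases mul_pos_iff.mp hsign with ⟨hap, hbp⟩ | ⟨han, hbn⟩
    · have hBpos : 0 ≤ B := by nlinarith
      rw [abs_of_nonneg hBpos, abs_of_pos hap, abs_of_pos hbp]
      have h1' := min_le_left a b
      have h2' := min_le_right a b
      nlinarith
    · have hBneg : B ≤ 0 := by nlinarith
      rw [abs_of_nonpos hBneg, abs_of_neg han, abs_of_neg hbn]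
      have h1' := min_le_left (-a) (-b)
      have h2' := min_le_right (-a) (-b)
      nlinarith
  have habs : |ui t - uj t| = |B| * U := by
    rw [hd, abs_mul, abs_of_nonneg hU0]
  rw [habs]
  have hmabs : 0 ≤ min |a| |b| := le_min (abs_nonneg a) (abs_nonneg b)
  calc min (uNs - u1s) (uNf - u1f) * min |a| |b| ≤ U * min |a| |b| :=
        mul_le_mul_of_nonneg_right hmU hmabs
    _ = min |a| |b| * U := by ring
    _ ≤ |B| * U := mul_le_mul_of_nonneg_right hmB hU0
end

section
/- Let t_s < t_f, let σ : ℝ → ℝ satisfy σ(t) ∈ [0, 1] for every t ∈ [t_s, t_f], let u_{1,s} < u_{N,s} and u_{1,f} < u_{N,f}, and define leader trajectories u_1(t), u_N(t) by interpolation with σ as above. Let V be a finite index set of at least two agents with reference weights β_{k,s}, β_{k,f} for each k ∈ V, and desired coordinates u_k(t) = (1 − β_k(t)) u_1(t) + β_k(t) u_N(t) with β_k(t) = (1 − σ(t)) β_{k,s} + σ(t) β_{k,f}. Assume that for every pair i ≠ j the endpoint differences β_{i,s} − β_{j,s} and β_{i,f} − β_{j,f} are nonzero with the same sign, and set β* =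 min over pairs i ≠ j of min{|β_{i,s} − β_{j,s}|, |β_{i,f} − β_{j,f}|} and d_min = min{u_{N,s} − u_{1,s}, u_{N,f} − u_{1,f}}. Let E be a real inner product space, and for each t ∈ [t_s, t_f] let c(t) ∈ E be a unit vector and p_k(t), r_k(t) ∈ E be positions such that ⟨p_i(t) − p_j(t), c(t)⟩ = u_i(t) − u_j(t) for all i, j, and ‖r_k(t) − p_k(t)‖ ≤ δ for all k. If d_min · β* ≥ 2(δ + ε) with δ, ε ≥ 0, then inter-agent collision avoidance holds: for every pair i ≠ j and every t ∈ [t_s, t_f], ‖r_i(t) − r_j(t)‖ ≥ 2ε. -/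
/-- The paper's Theorem 1: in the 1-D homogeneous coordination along the rotating
axis `c(t)`, if the endpoint reference-weight differences of every pair of agents
are nonzero with the same sign, every agent tracks its desired position within `δ`,
and `d_min · β* ≥ 2(δ + ε)`, then inter-agent collision avoidance holds:
`‖r_i(t) − r_j(t)‖ ≥ 2ε` for every pair `i ≠ j` and every `t ∈ [t_s, t_f]`. -/
theorem rtd_collision_avoidance
    {ι : Type*} [Fintype ι] (hcard : 2 ≤ Fintype.card ι)
    (ts tf : ℝ) (hts : ts < tf)
    (σ : ℝ → ℝ) (hσ : ∀ t ∈ Set.Icc ts tf, σ t ∈ Set.Icc (0 : ℝ) 1)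
    (u1s uNs u1f uNf : ℝ) (hs : u1s < uNs) (hf : u1f < uNf)
    (u1 uN : ℝ → ℝ)
    (hu1 : ∀ t, u1 t = (1 - σ t) * u1s + σ t * u1f)
    (huN : ∀ t, uN t = (1 - σ t) * uNs + σ t * uNf)
    (βs βf : ι → ℝ)
    (hsign : ∀ i j : ι, i ≠ j → (βs i - βs j) * (βf i - βf j) > 0)
    (β : ι → ℝ → ℝ)
    (hβ : ∀ (k : ι) (t : ℝ), β k t = (1 - σ t) * βs k + σ t * βf k)
    (u : ι → ℝ → ℝ)
    (hu : ∀ (k : ι) (t : ℝ), u k t = (1 - β k t) * u1 t + β k t * uN t)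
    (βstar dmin : ℝ)
    (hβstar : βstar =
      sInf {x : ℝ | ∃ i j : ι, i ≠ j ∧ x = min |βs i - βs j| |βf i - βf j|})
    (hdmin : dmin = min (uNs - u1s) (uNf - u1f))
    {E : Type*} [NormedAddCommGroup E] [InnerProductSpace ℝ E]
    (c : ℝ → E) (hc : ∀ t ∈ Set.Icc ts tf, ‖c t‖ = 1)
    (p r : ι → ℝ → E) (δ ε : ℝ) (hδ : 0 ≤ δ) (hε : 0 ≤ ε)
    (hproj : ∀ i j : ι, ∀ t ∈ Set.Icc ts tf,
      (inner ℝ (p i t - p j t) (c t) : ℝ) = u i t - u j t)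
    (htrack : ∀ k : ι, ∀ t ∈ Set.Icc ts tf, ‖r k t - p k t‖ ≤ δ)
    (hmain : 2 * (δ + ε) ≤ dmin * βstar) :
    ∀ i j : ι, i ≠ j → ∀ t ∈ Set.Icc ts tf, 2 * ε ≤ ‖r i t - r j t‖ := by

  intro i j hij t ht
  obtain ⟨hσ0, hσ1⟩ := hσ t ht
  have hdpos : 0 < dmin := by rw [hdmin]; exact lt_min (by linarith) (by linarith)
  have hbdd : BddBelow {x : ℝ | ∃ i j : ι, i ≠ j ∧ x = min |βs i - βs j| |βf i - βf j|} := by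
    refine ⟨0, fun x hx => ?_⟩
    obtain ⟨a, b, hab, hx⟩ := hx
    rw [hx]
    exact le_min (abs_nonneg _) (abs_nonneg _)
  have hβle : βstar ≤ min |βs i - βs j| |βf i - βf j| := by
    rw [hβstar]; exact csInf_le hbdd ⟨i, j, hij, rfl⟩
  have hβnn : 0 ≤ βstar := by
    rw [hβstar]
    refine le_csInf ⟨_, i, j, hij, rfl⟩ ?_
    rintro x ⟨a, b, hab, rfl⟩
    exact le_min (abs_nonneg _) (abs_nonneg _)
  have hud : u i t - u j t = (β i t - β j t) * (uN t - u1 t) := by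
    rw [hu, hu]; ring
  have hdlow : dmin ≤ uN t - u1 t := by
    rw [huN, hu1, hdmin]
    have h1 := min_le_left (uNs - u1s) (uNf - u1f)
    have h2 := min_le_right (uNs - u1s) (uNf - u1f)
    nlinarith
  have hβd : β i t - β j t = (1 - σ t) * (βs i - βs j) + σ t * (βf i - βf j) := by
    rw [hβ, hβ]; ring
  have habs : min |βs i - βs j| |βf i - βf j| ≤ |β i t - β j t| := by
    rcases mul_pos_iff.mp (hsign i j hij) with ⟨ha, hb⟩ | ⟨ha, hb⟩
    · rw [abs_of_pos ha, abs_of_pos hb]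
      have h1 := min_le_left (βs i - βs j) (βf i - βf j)
      have h2 := min_le_right (βs i - βs j) (βf i - βf j)
      have : min (βs i - βs j) (βf i - βf j) ≤ β i t - β j t := by
        rw [hβd]; nlinarith
      exact this.trans (le_abs_self _)
    · rw [abs_of_neg ha, abs_of_neg hb]
      have h1 := min_le_left (-(βs i - βs j)) (-(βf i - βf j))
      have h2 := min_le_right (-(βs i - βs j)) (-(βf i - βf j))
      have : min (-(βs i - βs j)) (-(βf i - βf j)) ≤ -(β i t - β j t) := by
        rw [hβd]; nlinarith
      exact this.trans (neg_le_abs _)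
  have hβabs : βstar ≤ |β i t - β j t| := hβle.trans habs
  have hulow : dmin * βstar ≤ |u i t - u j t| := by
    rw [hud, abs_mul, abs_of_pos (lt_of_lt_of_le hdpos hdlow)]
    nlinarith [abs_nonneg (β i t - β j t)]
  have hCS : |u i t - u j t| ≤ ‖p i t - p j t‖ := by
    rw [← hproj i j t ht]
    calc |(inner ℝ (p i t - p j t) (c t) : ℝ)| ≤ ‖p i t - p j t‖ * ‖c t‖ :=
          abs_real_inner_le_norm _ _
      _ = ‖p i t - p j t‖ := by rw [hc t ht, mul_one]
  have htri : ‖p i t - p j t‖ ≤ ‖r i t - p i t‖ + ‖r i t - r j t‖ + ‖r j t - p j t‖ := by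
    have : p i t - p j t = -(r i t - p i t) + (r i t - r j t) + (r j t - p j t) := by abel
    rw [this]
    calc ‖-(r i t - p i t) + (r i t - r j t) + (r j t - p j t)‖
        ≤ ‖-(r i t - p i t) + (r i t - r j t)‖ + ‖r j t - p j t‖ := norm_add_le _ _
      _ ≤ ‖-(r i t - p i t)‖ + ‖r i t - r j t‖ + ‖r j t - p j t‖ := by
          gcongr; exact norm_add_le _ _
      _ = ‖r i t - p i t‖ + ‖r i t - r j t‖ + ‖r j t - p j t‖ := by rw [norm_neg]
  have h1 := htrack i t ht
  have h2 := htrack j t ht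
  linarith
end

section
/- Let t_s < t_f, let σ : ℝ → ℝ satisfy σ(t) ∈ [0, 1] for every t ∈ [t_s, t_f], let u_{1,s} < u_{N,s} and u_{1,f} < u_{N,f}, and define leader trajectories u_1(t) = (1 − σ(t)) u_{1,s} + σ(t) u_{1,f} and u_N(t) = (1 − σ(t)) u_{N,s} + σ(t) u_{N,f}. For agents i and j with weights β_{i,s} < β_{j,s} and β_{i,f} < β_{j,f}, define β_i(t), β_j(t) by interpolation with σ and u_i(t) = (1 − β_i(t)) u_1(t) + β_i(t) u_N(t), u_j(t) = (1 − β_j(t)) u_1(t) + β_j(t) u_N(t). Then u_i(t) < u_j(t) for every t ∈ [t_s, t_f]; i.e., the ordering of the agents' coordinates along the deployment axis is preserved over the whole deployment interval. -/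
/-- Order preservation: if agent `i` is behind agent `j` (in reference weight) at both
the initial and final configurations, then its desired coordinate along the
deployment axis stays behind over the whole deployment interval. -/
theorem order_preservation_along_axis
    (ts tf : ℝ) (hts : ts < tf)
    (σ : ℝ → ℝ) (hσ : ∀ t ∈ Set.Icc ts tf, σ t ∈ Set.Icc (0 : ℝ) 1)
    (u1s uNs u1f uNf : ℝ) (hs : u1s < uNs) (hf : u1f < uNf)
    (u1 uN : ℝ → ℝ)
    (hu1 : ∀ t, u1 t = (1 - σ t) * u1s + σ t * u1f)
    (huN : ∀ t, uN t = (1 - σ t) * uNs + σ t * uNf)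
    (βis βif βjs βjf : ℝ) (hβs : βis < βjs) (hβf : βif < βjf)
    (βi βj ui uj : ℝ → ℝ)
    (hβi : ∀ t, βi t = (1 - σ t) * βis + σ t * βif)
    (hβj : ∀ t, βj t = (1 - σ t) * βjs + σ t * βjf)
    (hui : ∀ t, ui t = (1 - βi t) * u1 t + βi t * uN t)
    (huj : ∀ t, uj t = (1 - βj t) * u1 t + βj t * uN t) :
    ∀ t ∈ Set.Icc ts tf, ui t < uj t := by
  intro t ht
  obtain ⟨h0, h1⟩ := hσ t ht
  rw [hui, huj, hβi, hβj, hu1, huN]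
  set s := σ t with hst
  have hβ : (0:ℝ) < (1 - s) * (βjs - βis) + s * (βjf - βif) := by
    rcases lt_or_eq_of_le h1 with h | h
    · nlinarith
    · nlinarith
  have hu : (0:ℝ) < (1 - s) * (uNs - u1s) + s * (uNf - u1f) := by
    rcases lt_or_eq_of_le h1 with h | h
    · nlinarith
    · nlinarith
  nlinarith [mul_pos hβ hu]
end
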